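/- arXiv:0709.1994 — 3 statements merged into one kernel-verified Lean document; each statement's English description precedes it below -/
import Mathlib

section
/- For any u : Ω → ℝ̄, the composition (I ∘ S)(u) is normal lower semi-continuous, i.e., I(S(I(S(u)))) = I(S(u)). -/
/-!
`I` is monotone, deflationary and idempotent, `S` is monotone, inflationary and idempotent, and
for any such pair `I S I S ≤ I S S = I S` and `I S = I I S ≤ I S I S`. `I` is idempotent because
every point of `B_{δ/2}(x)` has its own `δ/2`-ball inside `B_δ(x)`; `S` is `I` conjugated by
negation, `S u = -I(-u)`, so it inherits idempotence.
-/

/-- The lower Baire operator: `I(u)(x) = sup_{δ>0} inf_{y ∈ B_δ(x)} u(y)`. -/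
noncomputable def lowerBaire {n : ℕ} {Ω : Set (Fin n → ℝ)} (u : Ω → EReal) : Ω → EReal :=
  fun x => ⨆ (δ : ℝ) (_ : 0 < δ), ⨅ y ∈ Metric.ball x δ, u y

/-- The upper Baire operator: `S(u)(x) = inf_{δ>0} sup_{y ∈ B_δ(x)} u(y)`. -/
noncomputable def upperBaire {n : ℕ} {Ω : Set (Fin n → ℝ)} (u : Ω → EReal) : Ω → EReal :=
  fun x => ⨅ (δ : ℝ) (_ : 0 < δ), ⨆ y ∈ Metric.ball x δ, u y

theorem comp_idem_of_deflationary_of_inflationary {α : Type*} [PartialOrder α] {i s : α → α}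
    (hi : Monotone i) (hi_le : ∀ a, i a ≤ a) (hii : ∀ a, i (i a) = i a)
    (hs : Monotone s) (le_hs : ∀ a, a ≤ s a) (hss : ∀ a, s (s a) = s a) (a : α) :
    i (s (i (s a))) = i (s a) := by
  apply le_antisymm
  · calc i (s (i (s a))) ≤ i (s (s a)) := hi (hs (hi_le _))
      _ = i (s a) := by rw [hss]
  · calc i (s a) = i (i (s a)) := (hii _).symm
      _ ≤ i (s (i (s a))) := hi (le_hs _)

theorem EReal.neg_iSup {ι : Sort*} (f : ι → EReal) : -(⨆ i, f i) = ⨅ i, -f i :=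
  EReal.negOrderIso.map_iSup f

theorem EReal.neg_iInf {ι : Sort*} (f : ι → EReal) : -(⨅ i, f i) = ⨆ i, -f i :=
  EReal.negOrderIso.map_iInf f

section Baire

variable {n : ℕ} {Ω : Set (Fin n → ℝ)}

theorem lowerBaire_le (u : Ω → EReal) : lowerBaire u ≤ u :=
  fun x => iSup₂_le fun _ hδ => iInf₂_le x (Metric.mem_ball_self hδ)

theorem le_upperBaire (u : Ω → EReal) : u ≤ upperBaire u :=
  fun x => le_iInf₂ fun _ hδ =>
    le_iSup₂ (f := fun y (_ : y ∈ Metric.ball x _) => u y) x (Metric.mem_ball_self hδ)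

theorem lowerBaire_mono : Monotone (lowerBaire (Ω := Ω)) :=
  fun _ _ h _ => iSup₂_mono fun _ _ => iInf₂_mono fun y _ => h y

theorem upperBaire_mono : Monotone (upperBaire (Ω := Ω)) :=
  fun _ _ h _ => iInf₂_mono fun _ _ => iSup₂_mono fun y _ => h y

theorem biInf_ball_le_lowerBaire (u : Ω → EReal) {x y : Ω} {δ : ℝ}
    (hy : y ∈ Metric.ball x (δ / 2)) (hδ : 0 < δ) :
    ⨅ z ∈ Metric.ball x δ, u z ≤ lowerBaire u y := by
  have hball : Metric.ball y (δ / 2) ⊆ Metric.ball x δ :=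
    Metric.ball_subset_ball' (by rw [Metric.mem_ball] at hy; linarith)
  exact (biInf_mono hball).trans
    (le_iSup₂ (f := fun ε (_ : 0 < ε) => ⨅ z ∈ Metric.ball y ε, u z) (δ / 2) (half_pos hδ))

theorem lowerBaire_idem (u : Ω → EReal) : lowerBaire (lowerBaire u) = lowerBaire u := by
  refine le_antisymm (lowerBaire_le _) fun x => iSup₂_le fun δ hδ => ?_
  calc ⨅ z ∈ Metric.ball x δ, u z
      ≤ ⨅ y ∈ Metric.ball x (δ / 2), lowerBaire u y :=
        le_iInf₂ fun y hy => biInf_ball_le_lowerBaire u hy hδ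
    _ ≤ lowerBaire (lowerBaire u) x :=
        le_iSup₂ (f := fun ε (_ : 0 < ε) => ⨅ y ∈ Metric.ball x ε, lowerBaire u y)
          (δ / 2) (half_pos hδ)

theorem upperBaire_eq_neg_lowerBaire_neg (u : Ω → EReal) : upperBaire u = -lowerBaire (-u) := by
  funext x
  simp only [upperBaire, lowerBaire, Pi.neg_apply, EReal.neg_iSup, EReal.neg_iInf, neg_neg]

theorem upperBaire_idem (u : Ω → EReal) : upperBaire (upperBaire u) = upperBaire u := by
  rw [upperBaire_eq_neg_lowerBaire_neg, upperBaire_eq_neg_lowerBaire_neg, neg_neg, lowerBaire_idem]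

end Baire

theorem lowerBaire_upperBaire_normal_general {n : ℕ} {Ω : Set (Fin n → ℝ)} (u : Ω → EReal) :
    lowerBaire (upperBaire (lowerBaire (upperBaire u))) = lowerBaire (upperBaire u) :=
  comp_idem_of_deflationary_of_inflationary lowerBaire_mono lowerBaire_le lowerBaire_idem
    upperBaire_mono le_upperBaire upperBaire_idem u

/-- `(I ∘ S)(u)` is normal lower semi-continuous: `I(S(I(S(u)))) = I(S(u))`. -/
theorem lowerBaire_upperBaire_normal {n : ℕ} {Ω : Set (Fin n → ℝ)} (hΩ : IsOpen Ω)
    (hne : Ω.Nonempty) (u : Ω → EReal) :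
    lowerBaire (upperBaire (lowerBaire (upperBaire u))) = lowerBaire (upperBaire u) :=
  lowerBaire_upperBaire_normal_general u
end

section
/- If u, v : Ω → ℝ̄ are normal lower semi-continuous and u = v on a dense subset D of Ω, then u = v on all of Ω. -/
/-!
`I(w)` is lower semicontinuous for every `w`, so a normal lower semicontinuous `u = I(S u)` is
lower semicontinuous. The supremum of a lower semicontinuous function over an open ball equals
its supremum over the part of the ball in the dense set `D`, hence `S u = S v`, and
`u = I(S u) = I(S v) = v`.
-/

theorem lowerSemicontinuous_lowerBaire {n : ℕ} {Ω : Set (Fin n → ℝ)} (w : Ω → EReal) :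
    LowerSemicontinuous (lowerBaire w) := by
  intro x c hc
  obtain ⟨δ, hδ, hcδ⟩ : ∃ δ : ℝ, 0 < δ ∧ c < ⨅ y ∈ Metric.ball x δ, w y := by
    simpa only [lowerBaire, lt_iSup_iff, exists_prop] using hc
  filter_upwards [Metric.ball_mem_nhds x hδ] with z hz
  have hε : 0 < δ - dist z x := sub_pos.mpr hz
  calc c < ⨅ y ∈ Metric.ball x δ, w y := hcδ
    _ ≤ ⨅ y ∈ Metric.ball z (δ - dist z x), w y :=
        biInf_mono (Metric.ball_subset_ball' (sub_add_cancel δ _).le)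
    _ ≤ lowerBaire w z := le_iSup₂_of_le (δ - dist z x) hε le_rfl

theorem LowerSemicontinuous.biSup_inter_dense {X α : Type*} [TopologicalSpace X]
    [CompleteLinearOrder α] {f : X → α} (hf : LowerSemicontinuous f) {U D : Set X}
    (hU : IsOpen U) (hD : Dense D) : ⨆ y ∈ U ∩ D, f y = ⨆ y ∈ U, f y := by
  refine le_antisymm (biSup_mono fun _ ↦ And.left) (iSup₂_le fun y hy ↦ ?_)
  refine le_of_forall_lt fun c hc ↦ ?_
  obtain ⟨d, ⟨hcd, hdU⟩, hdD⟩ :=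
    mem_closure_iff_nhds.mp (hD y) _ ((hf y c hc).and (hU.mem_nhds hy))
  exact lt_biSup_iff.mpr ⟨d, ⟨hdU, hdD⟩, hcd⟩

theorem upperBaire_eq_of_eqOn_dense {n : ℕ} {Ω : Set (Fin n → ℝ)} {f g : Ω → EReal}
    (hf : LowerSemicontinuous f) (hg : LowerSemicontinuous g) {D : Set Ω} (hD : Dense D)
    (hfg : Set.EqOn f g D) : upperBaire f = upperBaire g := by
  funext x
  refine iInf_congr fun δ ↦ iInf_congr fun _ ↦ ?_
  rw [← hf.biSup_inter_dense Metric.isOpen_ball hD, ← hg.biSup_inter_dense Metric.isOpen_ball hD]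
  exact iSup_congr fun y ↦ iSup_congr fun hy ↦ hfg hy.2

theorem nlsc_eq_of_denseEq_general {n : ℕ} {Ω : Set (Fin n → ℝ)}
    (u v : Ω → EReal) (hu : lowerBaire (upperBaire u) = u) (hv : lowerBaire (upperBaire v) = v)
    (D : Set Ω) (hD : Dense D) (huv : ∀ x ∈ D, u x = v x) : u = v := by
  have hu_lsc : LowerSemicontinuous u := hu ▸ lowerSemicontinuous_lowerBaire _
  have hv_lsc : LowerSemicontinuous v := hv ▸ lowerSemicontinuous_lowerBaire _
  rw [← hu, ← hv, upperBaire_eq_of_eqOn_dense hu_lsc hv_lsc hD huv]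

/-- Two normal lower semi-continuous functions agreeing on a dense set agree everywhere. -/
theorem nlsc_eq_of_denseEq {n : ℕ} {Ω : Set (Fin n → ℝ)} (hΩ : IsOpen Ω) (hne : Ω.Nonempty)
    (u v : Ω → EReal) (hu : lowerBaire (upperBaire u) = u) (hv : lowerBaire (upperBaire v) = v)
    (D : Set Ω) (hD : Dense D) (huv : ∀ x ∈ D, u x = v x) : u = v :=
  nlsc_eq_of_denseEq_general u v hu hv D hD huv
end

section
/- The almost-everywhere convergence structure λ_a is Hausdorff: if a filter F converges a.e. to both u and v, with u and v normal lower semi-continuous and continuous outside closed nowhere dense null sets, then u = v. -/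
open MeasureTheory Filter

/-- Membership of `ML⁰₀(Ω)`: a normal lower semi-continuous function which is
real-valued and continuous outside a closed nowhere dense Lebesgue-null set. -/
def ML00 {n : ℕ} {Ω : Set (Fin n → ℝ)} (u : Ω → EReal) : Prop :=
  lowerBaire (upperBaire u) = u ∧
  ∃ Γ : Set Ω, IsClosed Γ ∧ interior (closure Γ) = ∅ ∧ volume (Subtype.val '' Γ) = 0 ∧
    (∀ x ∈ Γᶜ, ∃ r : ℝ, u x = (r : EReal)) ∧ ContinuousOn u Γᶜ

/-- A filter `F` on `ML⁰₀(Ω)`-type functions converges almost everywhere to `u`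
if off some Lebesgue-null set `E ⊆ Ω` the evaluation filters converge. -/
def aeConv {n : ℕ} {Ω : Set (Fin n → ℝ)} (F : Filter (Ω → EReal)) (u : Ω → EReal) : Prop :=
  ∃ E : Set Ω, volume (Subtype.val '' E) = 0 ∧
    ∀ x ∈ Eᶜ, Tendsto (fun v => v x) F (nhds (u x))

/-!
Off the union `E` of the two exceptional null sets, `u x` and `v x` are limits of the same
evaluation filter, so they coincide. Since `Ω` is open, a null set has empty interior, so `u`
and `v` agree on the dense set `D` of points outside `E` and outside the singular sets `Γ_u`,
`Γ_v`, where both are continuous. At such points `S(u) = u`, and therefore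
`u = I(S(u))` is computed from the values of `u` on `D` alone: `u x = sup_δ inf_{B_δ(x) ∩ D} u`.
-/

lemma dense_compl_of_measure_image_val_eq_zero {X : Type*} [TopologicalSpace X]
    [MeasurableSpace X] {μ : Measure X} [μ.IsOpenPosMeasure] {Ω : Set X} (hΩ : IsOpen Ω)
    {E : Set Ω} (hE : μ (Subtype.val '' E) = 0) : Dense Eᶜ := by
  rw [← interior_eq_empty_iff_dense_compl, ← Set.image_eq_empty (f := Subtype.val)]
  exact Set.subset_eq_empty (hΩ.isOpenMap_subtype_val.image_interior_subset E)
    (μ.interior_eq_empty_of_null hE)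

section Baire

variable {n : ℕ} {Ω : Set (Fin n → ℝ)}

lemma upperBaire_eq_of_continuousAt {u : Ω → EReal} {z : Ω} (hc : ContinuousAt u z) :
    upperBaire u z = u z := by
  refine le_antisymm (le_of_forall_gt_imp_ge_of_dense fun a ha => ?_)
    (le_iInf₂ fun δ hδ => le_iSup₂_of_le z (Metric.mem_ball_self hδ) le_rfl)
  obtain ⟨δ, hδ, hball⟩ := Metric.mem_nhds_iff.1 (hc (isOpen_Iio.mem_nhds ha))
  exact iInf₂_le_of_le δ hδ (iSup₂_le fun y hy => (hball hy).le)

lemma iInf_inter_dense_le_upperBaire (u : Ω → EReal) {D U : Set Ω} (hD : Dense D)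
    (hU : IsOpen U) {y : Ω} (hy : y ∈ U) : ⨅ w ∈ U ∩ D, u w ≤ upperBaire u y := by
  refine le_iInf₂ fun ε hε => ?_
  obtain ⟨z, ⟨hzU, hzy⟩, hzD⟩ := hD.inter_open_nonempty _ (hU.inter Metric.isOpen_ball)
    ⟨y, hy, Metric.mem_ball_self hε⟩
  exact (iInf₂_le z ⟨hzU, hzD⟩).trans (le_iSup₂_of_le z hzy le_rfl)

lemma eq_iSup_iInf_inter_dense {u : Ω → EReal} (hu : lowerBaire (upperBaire u) = u)
    {D : Set Ω} (hD : Dense D) (hc : ∀ z ∈ D, ContinuousAt u z) (x : Ω) :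
    u x = ⨆ (δ : ℝ) (_ : 0 < δ), ⨅ y ∈ Metric.ball x δ ∩ D, u y := by
  rw [← congrFun hu x, lowerBaire]
  refine iSup_congr fun δ => iSup_congr fun _ => le_antisymm ?_ ?_
  · refine le_iInf₂ fun y hy => ?_
    rw [← upperBaire_eq_of_continuousAt (hc y hy.2)]
    exact iInf₂_le y hy.1
  · exact le_iInf₂ fun y hy =>
      iInf_inter_dense_le_upperBaire u hD Metric.isOpen_ball hy

lemma eq_of_eqOn_dense {u v : Ω → EReal} (hu : lowerBaire (upperBaire u) = u)
    (hv : lowerBaire (upperBaire v) = v) {D : Set Ω} (hD : Dense D)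
    (hcu : ∀ z ∈ D, ContinuousAt u z) (hcv : ∀ z ∈ D, ContinuousAt v z) (huv : D.EqOn u v) :
    u = v := by
  funext x
  rw [eq_iSup_iInf_inter_dense hu hD hcu, eq_iSup_iInf_inter_dense hv hD hcv]
  exact iSup_congr fun δ => iSup_congr fun _ => iInf_congr fun y => iInf_congr fun hy => huv hy.2

end Baire

/-- The a.e. convergence structure on `ML⁰₀(Ω)` is Hausdorff: limits are unique. -/
theorem aeConv_hausdorff {n : ℕ} {Ω : Set (Fin n → ℝ)} (hΩ : IsOpen Ω)
    (F : Filter (Ω → EReal)) [F.NeBot] (u v : Ω → EReal) (hu : ML00 u) (hv : ML00 v)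
    (hFu : aeConv F u) (hFv : aeConv F v) : u = v := by
  obtain ⟨hu_nlsc, Γu, hΓu, hΓu_nd, -, -, hu_cont⟩ := hu
  obtain ⟨hv_nlsc, Γv, hΓv, hΓv_nd, -, -, hv_cont⟩ := hv
  obtain ⟨Eu, hEu, hFu⟩ := hFu
  obtain ⟨Ev, hEv, hFv⟩ := hFv
  obtain ⟨hΓu_open, hΓu_dense⟩ := isClosed_isNowhereDense_iff_compl.1 ⟨hΓu, hΓu_nd⟩
  obtain ⟨hΓv_open, hΓv_dense⟩ := isClosed_isNowhereDense_iff_compl.1 ⟨hΓv, hΓv_nd⟩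
  have hE : Dense (Eu ∪ Ev)ᶜ := dense_compl_of_measure_image_val_eq_zero hΩ <| by
    rw [Set.image_union]
    exact measure_union_null hEu hEv
  have hD : Dense (Γuᶜ ∩ Γvᶜ ∩ (Eu ∪ Ev)ᶜ) :=
    (hΓu_dense.inter_of_isOpen_left hΓv_dense hΓu_open).inter_of_isOpen_left hE
      (hΓu_open.inter hΓv_open)
  refine eq_of_eqOn_dense hu_nlsc hv_nlsc hD (fun z hz => hu_cont.continuousAt (hΓu_open.mem_nhds hz.1.1))
    (fun z hz => hv_cont.continuousAt (hΓv_open.mem_nhds hz.1.2)) fun z hz => ?_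
  rw [Set.compl_union] at hz
  exact tendsto_nhds_unique (hFu z hz.2.1) (hFv z hz.2.2)
end
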